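/- Let A ∈ ℝ^{n×n} be Hurwitz, B ∈ ℝ^{n×m}, C ∈ ℝ^{1×n}, M ∈ ℝ^{n×n} symmetric, and let Q := ∫₀^∞ exp(Aᵀσ) Cᵀ C exp(Aσ) dσ + ∫₀^∞ ∫₀^∞ exp(Aᵀσ₁) M exp(Aσ₂) B Bᵀ exp(Aᵀσ₂) M exp(Aσ₁) dσ₁ dσ₂ be the total observability Gramian. Then ∫₀^∞ ‖C exp(Aσ) B‖_F² dσ + ∫₀^∞ ∫₀^∞ ‖Bᵀ exp(Aᵀσ₁) M exp(Aσ₂) B‖_F² dσ₁ dσ₂ = tr(Bᵀ Q B). -/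

import Mathlib

open Matrix MeasureTheory NormedSpace

/-!
Because `exp (σ • Aᵀ) = (exp (σ • A))ᵀ` and `M` is symmetric, each sum of squares on the left is
`tr (Bᵀ F B)` for the matching integrand `F` of the Gramian `Q`, so the identity is the
commutation of the linear functional `X ↦ tr (Bᵀ X B)` with the Bochner integral. The content is
the integrability of the Gramian integrands. On a generalized eigenvector for the eigenvalue `μ`,
`exp (t • A)` acts as `e^{tμ}` times a polynomial in `t`; for Hurwitz `A` this gives
`‖exp (t • A)‖ = O(e^{-εt})`, and the integrands are dominated by
`‖exp (σ₁ • A)‖² ‖exp (σ₂ • A)‖²`.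
-/

open Asymptotics Filter Topology

theorem Set.Finite.exists_pos_forall_re_lt_neg {s : Set ℂ} (hs : s.Finite)
    (h : ∀ μ ∈ s, μ.re < 0) : ∃ ε > 0, ∀ μ ∈ s, μ.re < -ε := by
  have hmargin : ∀ᶠ ε in 𝓝[>] (0 : ℝ), ∀ μ ∈ s, ε < -μ.re :=
    (eventually_all_finite hs).2 fun μ hμ =>
      (eventually_lt_nhds (neg_pos.2 (h μ hμ))).filter_mono nhdsWithin_le_nhds
  obtain ⟨ε, hε, hpos⟩ := (hmargin.and self_mem_nhdsWithin).exists
  exact ⟨ε, hpos, fun μ hμ => lt_neg_of_lt_neg (hε μ hμ)⟩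

namespace Matrix

theorem trace_mul_transpose_self {m n R : Type*} [Fintype m] [Fintype n] [CommSemiring R]
    (X : Matrix m n R) : (X * Xᵀ).trace = ∑ i, ∑ j, X i j ^ 2 := by
  simp [trace, mul_apply, sq]

variable {ι κ : Type*} [Fintype ι] [Fintype κ]

section Exponential

/- `exp` on matrices does not depend on a norm; the lemmas about it that need one are applied
with the `L∞` operator norm. Over `ℝ`, the `ℚ`-algebra structure has to come from
`restrictScalars`, otherwise the completeness instance is not found. -/

variable [DecidableEq ι]

theorem summable_expSeries_smul (A : Matrix ι ι ℂ) :
    Summable fun k : ℕ => (k.factorial⁻¹ : ℂ) • A ^ k := by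
  let _ : NormedRing (Matrix ι ι ℂ) := Matrix.linftyOpNormedRing
  let _ : NormedAlgebra ℂ (Matrix ι ι ℂ) := Matrix.linftyOpNormedAlgebra
  exact expSeries_summable' (𝕂 := ℂ) A

theorem continuous_exp_smul (A : Matrix ι ι ℝ) : Continuous fun t : ℝ => exp (t • A) := by
  let _ : NormedRing (Matrix ι ι ℝ) := Matrix.linftyOpNormedRing
  let _ : NormedAlgebra ℝ (Matrix ι ι ℝ) := Matrix.linftyOpNormedAlgebra
  let _ : NormedAlgebra ℚ (Matrix ι ι ℝ) := NormedAlgebra.restrictScalars ℚ ℝ _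
  fun_prop

theorem exp_map_ofReal (A : Matrix ι ι ℝ) :
    exp (A.map (Complex.ofReal ·)) = (exp A).map (Complex.ofReal ·) := by
  let _ : NormedRing (Matrix ι ι ℝ) := Matrix.linftyOpNormedRing
  let _ : NormedAlgebra ℝ (Matrix ι ι ℝ) := Matrix.linftyOpNormedAlgebra
  let _ : NormedAlgebra ℚ (Matrix ι ι ℝ) := NormedAlgebra.restrictScalars ℚ ℝ _
  let _ : NormedRing (Matrix ι ι ℂ) := Matrix.linftyOpNormedRing
  exact (map_exp (Complex.ofRealHom.mapMatrix : Matrix ι ι ℝ →+* Matrix ι ι ℂ)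
    (continuous_id.matrix_map Complex.continuous_ofReal) A).symm

theorem exp_smul_transpose (A : Matrix ι ι ℝ) (t : ℝ) : exp (t • Aᵀ) = (exp (t • A))ᵀ := by
  rw [← transpose_smul, exp_transpose]

theorem exp_mulVec_of_pow_mulVec_eq_zero {N : Matrix ι ι ℂ} {x : ι → ℂ} {K : ℕ}
    (hx : N ^ K *ᵥ x = 0) :
    exp N *ᵥ x = ∑ k ∈ Finset.range K, (k.factorial⁻¹ : ℂ) • (N ^ k *ᵥ x) := by
  let applyAt : Matrix ι ι ℂ →L[ℂ] ι → ℂ :=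
    LinearMap.toContinuousLinearMap ((LinearMap.applyₗ x).comp toLin'.toLinearMap)
  have hvanish : ∀ k ∉ Finset.range K, (k.factorial⁻¹ : ℂ) • (N ^ k *ᵥ x) = 0 := by
    intro k hk
    rw [← Nat.sub_add_cancel (not_lt.1 (Finset.mem_range.not.1 hk)), pow_add,
      ← mulVec_mulVec, hx, mulVec_zero, smul_zero]
  calc exp N *ᵥ x = applyAt (∑' k : ℕ, (k.factorial⁻¹ : ℂ) • N ^ k) := by
        rw [exp_eq_tsum ℂ]; rfl
    _ = ∑' k : ℕ, (k.factorial⁻¹ : ℂ) • (N ^ k *ᵥ x) := by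
        rw [applyAt.map_tsum (summable_expSeries_smul N)]
        simp only [applyAt, map_smul]; rfl
    _ = _ := tsum_eq_sum hvanish

theorem exp_smul_mulVec_of_pow_sub_mulVec_eq_zero {A : Matrix ι ι ℂ} {μ : ℂ} {x : ι → ℂ}
    {K : ℕ} (hx : (A - μ • 1) ^ K *ᵥ x = 0) (z : ℂ) :
    exp (z • A) *ᵥ x = Complex.exp (z * μ) •
      ∑ k ∈ Finset.range K, ((k.factorial : ℂ)⁻¹ * z ^ k) • ((A - μ • 1) ^ k *ᵥ x) := by
  have hsplit : z • A = diagonal (fun _ => z * μ) + z • (A - μ • 1) := by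
    rw [smul_sub, smul_smul, ← smul_one_eq_diagonal]; abel
  have hcomm : Commute (diagonal fun _ => z * μ) (z • (A - μ • 1)) := by
    rw [← smul_one_eq_diagonal]; exact (Commute.one_left _).smul_left _
  have hnil : (z • (A - μ • 1)) ^ K *ᵥ x = 0 := by rw [smul_pow, smul_mulVec, hx, smul_zero]
  rw [hsplit, exp_add_of_commute _ _ hcomm, exp_diagonal, ← mulVec_mulVec,
    exp_mulVec_of_pow_mulVec_eq_zero hnil, Pi.exp_def, ← Complex.exp_eq_exp_ℂ,
    ← smul_one_eq_diagonal, smul_mulVec, one_mulVec]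
  simp only [smul_pow, smul_mulVec, smul_smul]

theorem isBigO_exp_smul_mulVec_of_mem_maxGenEigenspace {A : Matrix ι ι ℂ} {μ : ℂ} {ε : ℝ}
    (hμ : μ.re < -ε) {x : ι → ℂ} (hx : x ∈ Module.End.maxGenEigenspace (toLin' A) μ) :
    (fun t : ℝ => exp ((t : ℂ) • A) *ᵥ x) =O[atTop] fun t => Real.exp (-ε * t) := by
  obtain ⟨K, hK⟩ := (Module.End.mem_maxGenEigenspace _ _ _).1 hx
  have hK' : (A - μ • 1) ^ K *ᵥ x = 0 := by
    rwa [← toLin'_apply, toLin'_pow, map_sub, map_smul, toLin'_one]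
  simp_rw [exp_smul_mulVec_of_pow_sub_mulVec_eq_zero hK', Finset.smul_sum]
  refine IsBigO.fun_sum fun k _ => ?_
  have hpoly : (fun t : ℝ => t ^ k * Real.exp (μ.re * t)) =O[atTop] fun t => Real.exp (-ε * t) :=
    ((isLittleO_pow_exp_pos_mul_atTop k (by linarith : 0 < -ε - μ.re)).isBigO.mul
      (isBigO_refl _ _)).congr_right fun t => by rw [← Real.exp_add]; ring_nf
  refine (isBigO_of_le' (c := ‖(k.factorial : ℂ)⁻¹ • ((A - μ • 1) ^ k *ᵥ x)‖) _
    fun t => le_of_eq ?_).trans hpoly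
  simp only [mul_smul, norm_smul, norm_mul, norm_pow, Complex.norm_exp, Complex.re_ofReal_mul,
    Complex.norm_real, Real.norm_eq_abs, Real.abs_exp]
  rw [mul_comm t]
  ring

theorem isBigO_exp_smul_mulVec_of_forall_re_lt {A : Matrix ι ι ℂ} {ε : ℝ}
    (hA : ∀ μ ∈ spectrum ℂ A, μ.re < -ε) (x : ι → ℂ) :
    (fun t : ℝ => exp ((t : ℂ) • A) *ᵥ x) =O[atTop] fun t => Real.exp (-ε * t) := by
  have hx : x ∈ ⨆ μ, Module.End.maxGenEigenspace (toLin' A) μ := by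
    rw [Module.End.iSup_maxGenEigenspace_eq_top]; trivial
  induction hx using Submodule.iSup_induction' with
  | mem μ y hy =>
    rcases eq_or_ne y 0 with rfl | hy0
    · simpa only [mulVec_zero] using isBigO_zero _ _
    have hμ : Module.End.HasEigenvalue (toLin' A) μ :=
      Module.End.HasUnifEigenvalue.lt zero_lt_one ((Submodule.ne_bot_iff _).2 ⟨y, hy, hy0⟩)
    refine isBigO_exp_smul_mulVec_of_mem_maxGenEigenspace (hA μ ?_) hy
    rw [← spectrum_toLin']
    exact hμ.mem_spectrum
  | zero => simpa only [mulVec_zero] using isBigO_zero _ _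
  | add y z _ _ hy hz => simpa only [mulVec_add] using hy.add hz

end Exponential

section SupNorm

attribute [local instance] Matrix.normedAddCommGroup Matrix.normedSpace

/- Matrix norms are only local instances, so `Integrable` and `AEStronglyMeasurable` do not find
these two instances for matrix-valued functions by themselves. -/

abbrev continuousENorm {m n α : Type*} [Fintype m] [Fintype n] [NormedAddCommGroup α] :
    ContinuousENorm (Matrix m n α) :=
  @SeminormedAddGroup.toContinuousENorm (Matrix m n α) _

attribute [local instance] continuousENorm

instance {m n α : Type*} [Finite m] [Finite n] [TopologicalSpace α]
    [TopologicalSpace.PseudoMetrizableSpace α] :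
    TopologicalSpace.PseudoMetrizableSpace (Matrix m n α) :=
  inferInstanceAs (TopologicalSpace.PseudoMetrizableSpace (m → n → α))

theorem norm_mul_le_card_mul {l m n α : Type*} [Fintype l] [Fintype m] [Fintype n]
    [NonUnitalNormedRing α] (X : Matrix l m α) (Y : Matrix m n α) :
    ‖X * Y‖ ≤ Fintype.card m * ‖X‖ * ‖Y‖ := by
  refine (norm_le_iff (by positivity)).2 fun i j => ?_
  calc ‖(X * Y) i j‖ ≤ ∑ k, ‖X i k‖ * ‖Y k j‖ :=
        (norm_sum_le _ _).trans (Finset.sum_le_sum fun k _ => norm_mul_le _ _)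
    _ ≤ ∑ _k : m, ‖X‖ * ‖Y‖ := Finset.sum_le_sum fun k _ =>
        mul_le_mul (norm_entry_le_entrywise_sup_norm X) (norm_entry_le_entrywise_sup_norm Y)
          (norm_nonneg _) (norm_nonneg _)
    _ = Fintype.card m * ‖X‖ * ‖Y‖ := by simp [mul_assoc]

theorem norm_mul_mul_le_card_mul {l m n p α : Type*} [Fintype l] [Fintype m] [Fintype n]
    [Fintype p] [NonUnitalNormedRing α] (X : Matrix l m α) (P : Matrix m n α)
    (Y : Matrix n p α) :
    ‖X * P * Y‖ ≤ Fintype.card m * Fintype.card n * ‖X‖ * ‖P‖ * ‖Y‖ := by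
  calc ‖X * P * Y‖ ≤ Fintype.card n * ‖X * P‖ * ‖Y‖ := norm_mul_le_card_mul _ _
    _ ≤ Fintype.card n * (Fintype.card m * ‖X‖ * ‖P‖) * ‖Y‖ := by
        gcongr; exact norm_mul_le_card_mul _ _
    _ = _ := by ring

theorem integral_trace_mul_mul {α : Type*} [MeasurableSpace α] {μ : Measure α}
    {f : α → Matrix ι ι ℝ} (hf : Integrable f μ) (P : Matrix κ ι ℝ) (Q : Matrix ι κ ℝ) :
    ∫ x, (P * f x * Q).trace ∂μ = (P * (∫ x, f x ∂μ) * Q).trace :=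
  (LinearMap.toContinuousLinearMap (traceLinearMap κ ℝ ℝ ∘ₗ mulRightLinearMap κ ℝ Q ∘ₗ
    mulLeftLinearMap ι ℝ P)).integral_comp_comm hf

variable [DecidableEq ι]

theorem isBigO_exp_smul_of_forall_re_lt {A : Matrix ι ι ℂ} {ε : ℝ}
    (hA : ∀ μ ∈ spectrum ℂ A, μ.re < -ε) :
    (fun t : ℝ => exp ((t : ℂ) • A)) =O[atTop] fun t => Real.exp (-ε * t) := by
  refine isBigO_pi.2 fun i => isBigO_pi.2 fun j => ?_
  simpa [mulVec_single_one] using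
    isBigO_pi.1 (isBigO_exp_smul_mulVec_of_forall_re_lt hA (Pi.single j 1)) i

theorem exists_isBigO_exp_smul {A : Matrix ι ι ℝ}
    (hA : ∀ μ ∈ spectrum ℂ (A.map (Complex.ofReal ·)), μ.re < 0) :
    ∃ ε > 0, (fun t : ℝ => exp (t • A)) =O[atTop] fun t => Real.exp (-ε * t) := by
  obtain ⟨ε, hε, hlt⟩ := (finite_spectrum _).exists_pos_forall_re_lt_neg hA
  refine ⟨ε, hε, IsBigO.of_norm_left ?_⟩
  refine (isBigO_exp_smul_of_forall_re_lt hlt).norm_left.congr_left fun t => ?_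
  rw [show (t : ℂ) • A.map (Complex.ofReal ·) = (t • A).map (Complex.ofReal ·) by ext; simp,
    exp_map_ofReal, norm_map_eq _ _ Complex.norm_real]

theorem integrableOn_norm_exp_smul_sq {A : Matrix ι ι ℝ}
    (hA : ∀ μ ∈ spectrum ℂ (A.map (Complex.ofReal ·)), μ.re < 0) :
    IntegrableOn (fun t : ℝ => ‖exp (t • A)‖ ^ 2) (Set.Ioi 0) := by
  obtain ⟨ε, hε, hdecay⟩ := exists_isBigO_exp_smul hA
  refine integrable_of_isBigO_exp_neg (by positivity : 0 < 2 * ε)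
    ((continuous_exp_smul A).norm.pow 2).continuousOn ?_
  refine (hdecay.norm_left.pow 2).congr_right fun t => ?_
  rw [← Real.exp_nat_mul]
  ring_nf

theorem integrableOn_exp_transpose_mul_mul_exp {A : Matrix ι ι ℝ}
    (hA : ∀ μ ∈ spectrum ℂ (A.map (Complex.ofReal ·)), μ.re < 0) (P : Matrix ι ι ℝ) :
    IntegrableOn (fun σ : ℝ => exp (σ • Aᵀ) * P * exp (σ • A)) (Set.Ioi 0) := by
  have hE := continuous_exp_smul A
  have hEt := continuous_exp_smul Aᵀ
  refine ((integrableOn_norm_exp_smul_sq hA).const_mul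
    (Fintype.card ι * Fintype.card ι * ‖P‖)).mono'
    (by fun_prop : Continuous _).aestronglyMeasurable (ae_of_all _ fun σ => ?_)
  calc ‖exp (σ • Aᵀ) * P * exp (σ • A)‖
      ≤ Fintype.card ι * Fintype.card ι * ‖exp (σ • Aᵀ)‖ * ‖P‖ * ‖exp (σ • A)‖ :=
        norm_mul_mul_le_card_mul _ _ _
    _ = _ := by rw [exp_smul_transpose, norm_transpose]; ring

theorem integrableOn_exp_transpose_mul_mul_exp_prod {A : Matrix ι ι ℝ}
    (hA : ∀ μ ∈ spectrum ℂ (A.map (Complex.ofReal ·)), μ.re < 0) (P : Matrix ι ι ℝ)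
    (B : Matrix ι κ ℝ) :
    IntegrableOn (fun σ : ℝ × ℝ => exp (σ.1 • Aᵀ) * P * exp (σ.2 • A) * B * Bᵀ *
      exp (σ.2 • Aᵀ) * P * exp (σ.1 • A)) (Set.Ioi 0 ×ˢ Set.Ioi 0) := by
  have hE₁ := (continuous_exp_smul A).fst' (Y := ℝ)
  have hE₂ := (continuous_exp_smul A).snd' (X := ℝ)
  have hEt₁ := (continuous_exp_smul Aᵀ).fst' (Y := ℝ)
  have hEt₂ := (continuous_exp_smul Aᵀ).snd' (X := ℝ)
  set c : ℝ := Fintype.card ι * Fintype.card ι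
  have hbound : ∀ σ : ℝ × ℝ, ‖exp (σ.1 • Aᵀ) * P * exp (σ.2 • A) * B * Bᵀ *
      exp (σ.2 • Aᵀ) * P * exp (σ.1 • A)‖ ≤
      c ^ 3 * ‖P‖ ^ 2 * ‖B * Bᵀ‖ * (‖exp (σ.1 • A)‖ ^ 2 * ‖exp (σ.2 • A)‖ ^ 2) := by
    rintro ⟨s, t⟩
    simp only [exp_smul_transpose]
    generalize exp (s • A) = E
    generalize exp (t • A) = F
    rw [show Eᵀ * P * F * B * Bᵀ * Fᵀ * P * E = Eᵀ * (P * (F * (B * Bᵀ) * Fᵀ) * P) * E by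
      simp only [Matrix.mul_assoc]]
    calc ‖Eᵀ * (P * (F * (B * Bᵀ) * Fᵀ) * P) * E‖
        ≤ c * ‖Eᵀ‖ * ‖P * (F * (B * Bᵀ) * Fᵀ) * P‖ * ‖E‖ := norm_mul_mul_le_card_mul _ _ _
      _ ≤ c * ‖Eᵀ‖ * (c * ‖P‖ * (c * ‖F‖ * ‖B * Bᵀ‖ * ‖Fᵀ‖) * ‖P‖) * ‖E‖ := by
        gcongr
        refine (norm_mul_mul_le_card_mul _ _ _).trans ?_
        gcongr
        exact norm_mul_mul_le_card_mul _ _ _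
      _ = _ := by rw [norm_transpose, norm_transpose]; ring
  have hdom : Integrable (fun σ : ℝ × ℝ => ‖exp (σ.1 • A)‖ ^ 2 * ‖exp (σ.2 • A)‖ ^ 2)
      (volume.restrict (Set.Ioi 0 ×ˢ Set.Ioi 0)) := by
    rw [Measure.volume_eq_prod, ← Measure.prod_restrict]
    exact (integrableOn_norm_exp_smul_sq hA).mul_prod (integrableOn_norm_exp_smul_sq hA)
  exact (hdom.const_mul _).mono' (by fun_prop : Continuous _).aestronglyMeasurable
    (ae_of_all _ hbound)

end SupNorm

end Matrix

attribute [local instance] Matrix.normedAddCommGroup Matrix.normedSpace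

/-- The squared `H₂` norm of the LQO system `(A, B, C, M)`, defined via its Volterra
kernels, equals `tr(Bᵀ Q B)` where `Q` is the total observability Gramian; the squared
Frobenius norms are written as sums of squares of entries. -/
theorem lqo_h2_norm_gramian {n m : ℕ}
    (A M : Matrix (Fin n) (Fin n) ℝ)
    (B : Matrix (Fin n) (Fin m) ℝ) (C : Matrix (Fin 1) (Fin n) ℝ)
    (hM : M.IsSymm)
    (hA : ∀ μ ∈ spectrum ℂ (A.map (Complex.ofReal ·)), μ.re < 0)
    (Q : Matrix (Fin n) (Fin n) ℝ)
    (hQ : Q = (∫ σ : ℝ in Set.Ioi 0, exp (σ • Aᵀ) * Cᵀ * C * exp (σ • A)) +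
      ∫ σ : ℝ × ℝ in Set.Ioi (0:ℝ) ×ˢ Set.Ioi (0:ℝ),
        exp (σ.1 • Aᵀ) * M * exp (σ.2 • A) * B * Bᵀ *
          exp (σ.2 • Aᵀ) * M * exp (σ.1 • A)) :
    (∫ σ : ℝ in Set.Ioi 0, ∑ i, ∑ j, ((C * exp (σ • A) * B) i j) ^ 2) +
      (∫ σ : ℝ × ℝ in Set.Ioi (0:ℝ) ×ˢ Set.Ioi (0:ℝ),
        ∑ i, ∑ j, ((Bᵀ * exp (σ.1 • Aᵀ) * M * exp (σ.2 • A) * B) i j) ^ 2) =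
      (Bᵀ * Q * B).trace := by
  have h₁ : ∀ σ : ℝ, ∑ i, ∑ j, ((C * exp (σ • A) * B) i j) ^ 2 =
      (Bᵀ * (exp (σ • Aᵀ) * Cᵀ * C * exp (σ • A)) * B).trace := fun σ => by
    rw [← trace_mul_transpose_self, trace_mul_comm]
    simp only [transpose_mul, exp_smul_transpose, Matrix.mul_assoc]
  have h₂ : ∀ σ : ℝ × ℝ, ∑ i, ∑ j, ((Bᵀ * exp (σ.1 • Aᵀ) * M * exp (σ.2 • A) * B) i j) ^ 2 =
      (Bᵀ * (exp (σ.1 • Aᵀ) * M * exp (σ.2 • A) * B * Bᵀ * exp (σ.2 • Aᵀ) * M *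
        exp (σ.1 • A)) * B).trace := fun σ => by
    rw [← trace_mul_transpose_self]
    simp only [transpose_mul, transpose_transpose, exp_smul_transpose, hM.eq, Matrix.mul_assoc]
  have hF₁ := integrableOn_exp_transpose_mul_mul_exp hA (Cᵀ * C)
  have hF₂ := integrableOn_exp_transpose_mul_mul_exp_prod hA M B
  simp only [← Matrix.mul_assoc] at hF₁
  simp only [h₁, h₂, integral_trace_mul_mul hF₁, integral_trace_mul_mul hF₂, hQ,
    Matrix.mul_add, Matrix.add_mul, trace_add]
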